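/- arXiv:1602.02953 — 3 statements merged into one kernel-verified Lean document; each statement's English description precedes it below -/
import Mathlib

section
/- Let $H\in(3/4,1)$, let $n>1$ be an integer, let $\mu\in\mathbb{R}$, $\sigma>0$, $\alpha>0$, and set $\Sigma_0=\frac1n I_n+\alpha^2 C_n$ and $\Sigma_1=\frac1n I_n+\frac{\mu^2\alpha^2}{\sigma^2 n^2}\,\mathbf{1}_{n\times n}$. Then $\operatorname{tr}(\Sigma_1^{-1}\Sigma_0)=n+\alpha^2 n^{2-2H}-\frac{\mu^2\alpha^2}{\mu^2\alpha^2+\sigma^2}\,(1+\alpha^2)$. -/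
open MeasureTheory Matrix Filter Real

/-- The Gaussian measure on `ℝⁿ` with mean `m` and (invertible) covariance matrix `S`,
defined via its density with respect to Lebesgue measure. -/
noncomputable def gaussianMeasure (n : ℕ) (m : Fin n → ℝ) (S : Matrix (Fin n) (Fin n) ℝ) :
    Measure (Fin n → ℝ) :=
  volume.withDensity fun x => ENNReal.ofReal
    ((Real.sqrt ((2 * Real.pi) ^ n * S.det))⁻¹ *
      Real.exp (-(1 / 2 : ℝ) * ((x - m) ⬝ᵥ S⁻¹ *ᵥ (x - m))))

/-- The relative entropy (Kullback–Leibler divergence) `H(μ | ν) = ∫ log (dμ/dν) dμ`. -/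
noncomputable def relativeEntropy {Ω : Type*} [MeasurableSpace Ω] (μ ν : Measure Ω) : ℝ :=
  ∫ x, llr μ ν x ∂μ

/-- The covariance matrix `C_n` of the increments over the uniform partition of `[0,1]`
of a fractional Brownian motion with Hurst parameter `H`. -/
noncomputable def fbmCov (H : ℝ) (n : ℕ) : Matrix (Fin n) (Fin n) ℝ :=
  Matrix.of fun i j =>
    (2 * (n : ℝ) ^ (2 * H))⁻¹ *
      (|((i : ℕ) : ℝ) - ((j : ℕ) : ℝ) + 1| ^ (2 * H)
        + |((i : ℕ) : ℝ) - ((j : ℕ) : ℝ) - 1| ^ (2 * H)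
        - 2 * |((i : ℕ) : ℝ) - ((j : ℕ) : ℝ)| ^ (2 * H))

/-- The `n × n` all-ones matrix `1_{n×n}`. -/
def onesMatrix (n : ℕ) : Matrix (Fin n) (Fin n) ℝ := Matrix.of fun _ _ => 1

/-- The all-ones vector `1_n ∈ ℝⁿ`. -/
def onesVec (n : ℕ) : Fin n → ℝ := fun _ => 1

/-! Because `𝟙𝟙ᵀ` squares to `n • 𝟙𝟙ᵀ`, the matrix `Σ₁ = n⁻¹ I + c 𝟙𝟙ᵀ` is inverted inside
`span {I, 𝟙𝟙ᵀ}` (Sherman–Morrison): `Σ₁⁻¹ = n I - k 𝟙𝟙ᵀ` with `k = μ²α² / (μ²α² + σ²)`.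
The trace of `Σ₁⁻¹ Σ₀` then only involves the diagonal of `C_n`, constant equal to `n^{-2H}`, and
`tr (𝟙𝟙ᵀ C_n) = 𝟙ᵀ C_n 𝟙 = Var Z^H_1 = 1`: the double sum of the second differences of
`k ↦ |k|^{2H}` at `i - j` telescopes to `n^{2H} + n^{2H} - 2 · 0^{2H}`. -/

open Finset

section SecondDifferences

variable {G : Type*} [AddCommGroup G] (g : ℤ → G) (n : ℕ)

theorem sum_range_apply_sub_eq_sum_range_apply_succ :
    ∑ j ∈ range n, g (n - j) = ∑ j ∈ range n, g (j + 1) := by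
  rw [← sum_range_reflect (fun j : ℕ => g (j + 1))]
  exact sum_congr rfl fun j hj => congrArg g (by simp only [mem_range] at hj; omega)

theorem sum_range_sum_range_secondDiff :
    ∑ i ∈ range n, ∑ j ∈ range n, (g (i - j + 1) + g (i - j - 1) - 2 • g (i - j)) =
      g n + g (-n) - 2 • g 0 := by
  have hrow (j : ℕ) : ∑ i ∈ range n, (g ((i + 1 : ℕ) - j) - g (i - j)) = g (n - j) - g (-j) := by
    simpa using sum_range_sub (fun i : ℕ => g (i - j)) n
  have hcol (i : ℕ) : ∑ j ∈ range n, (g (i - j) - g (i - j - 1)) = g i - g (i - n) := by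
    simpa [sub_add_eq_sub_sub] using sum_range_sub' (fun j : ℕ => g (i - j)) n
  have hreflect := sum_range_apply_sub_eq_sum_range_apply_succ (g ∘ Neg.neg) n
  simp only [Function.comp_apply, neg_sub] at hreflect
  calc ∑ i ∈ range n, ∑ j ∈ range n, (g (i - j + 1) + g (i - j - 1) - 2 • g (i - j))
      = ∑ i ∈ range n, ∑ j ∈ range n, (g ((i + 1 : ℕ) - j) - g (i - j))
          - ∑ i ∈ range n, ∑ j ∈ range n, (g (i - j) - g (i - j - 1)) := by
        simp only [← sum_sub_distrib]
        refine sum_congr rfl fun i _ => sum_congr rfl fun j _ => ?_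
        rw [Nat.cast_succ, add_sub_right_comm (i : ℤ), two_nsmul]
        abel
    _ = ∑ j ∈ range n, (g (n - j) - g (-j)) - ∑ i ∈ range n, (g i - g (i - n)) := by
        rw [sum_comm]
        simp only [hrow, hcol]
    _ = (∑ j ∈ range n, (g (j + 1) - g j)) + ∑ j ∈ range n, (g (-(j + 1)) - g (-j)) := by
        simp only [sum_sub_distrib]
        rw [sum_range_apply_sub_eq_sum_range_apply_succ, hreflect]
        abel
    _ = g n + g (-n) - 2 • g 0 := by
        have hpos : ∑ j ∈ range n, (g (j + 1) - g j) = g n - g 0 := by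
          simpa using sum_range_sub (fun j : ℕ => g j) n
        have hneg : ∑ j ∈ range n, (g (-(j + 1)) - g (-j)) = g (-n) - g 0 := by
          simpa using sum_range_sub (fun j : ℕ => g (-j)) n
        rw [hpos, hneg, two_nsmul]
        abel

end SecondDifferences

section FbmCov

variable {H : ℝ} {n : ℕ}

theorem fbmCov_apply_self (hH : H ≠ 0) (i : Fin n) : fbmCov H n i i = ((n : ℝ) ^ (2 * H))⁻¹ := by
  simp only [fbmCov, of_apply, sub_self, zero_add, zero_sub, abs_neg, abs_one, abs_zero,
    one_rpow, zero_rpow (mul_ne_zero two_ne_zero hH)]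
  rw [mul_inv]
  ring

theorem trace_fbmCov (hH : H ≠ 0) : trace (fbmCov H n) = n * ((n : ℝ) ^ (2 * H))⁻¹ := by
  simp [trace, fbmCov_apply_self hH]

theorem sum_fbmCov_entries (hH : H ≠ 0) (hn : n ≠ 0) : ∑ i, ∑ j, fbmCov H n i j = 1 := by
  have key := sum_range_sum_range_secondDiff (fun k : ℤ => |(k : ℝ)| ^ (2 * H)) n
  simp only [← Fin.sum_univ_eq_sum_range] at key
  push_cast [nsmul_eq_mul, abs_neg, Nat.abs_cast, abs_zero,
    zero_rpow (mul_ne_zero two_ne_zero hH)] at key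
  simp only [fbmCov, of_apply, ← mul_sum, key]
  have : (0 : ℝ) < n ^ (2 * H) := by positivity
  field_simp
  ring

end FbmCov

section OnesMatrix

variable {n : ℕ}

theorem onesMatrix_mul_self : onesMatrix n * onesMatrix n = (n : ℝ) • onesMatrix n := by
  ext i j
  simp [onesMatrix, mul_apply]

theorem trace_onesMatrix : trace (onesMatrix n) = n := by
  simp [onesMatrix, trace]

theorem trace_onesMatrix_mul (A : Matrix (Fin n) (Fin n) ℝ) :
    trace (onesMatrix n * A) = ∑ i, ∑ j, A i j := by
  simp [onesMatrix, trace, mul_apply, sum_comm (γ := Fin n)]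

theorem inv_smul_one_add_smul_onesMatrix {a b : ℝ} (ha : a ≠ 0) (hab : a + n * b ≠ 0) :
    (a • (1 : Matrix (Fin n) (Fin n) ℝ) + b • onesMatrix n)⁻¹ =
      a⁻¹ • 1 - (b / (a * (a + n * b))) • onesMatrix n := by
  refine inv_eq_right_inv ?_
  have hcoeff : (a + n * b) * (b / (a * (a + n * b))) = b * a⁻¹ := by
    field_simp
  simp only [add_mul, mul_sub, Matrix.smul_mul, Matrix.mul_smul, one_mul, mul_one,
    onesMatrix_mul_self, smul_smul]
  linear_combination (norm := module) mul_inv_cancel₀ ha • (1 : Matrix (Fin n) (Fin n) ℝ) -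
    hcoeff • onesMatrix n

end OnesMatrix

theorem statement8_general (H : ℝ) (hH : H ∈ Set.Ioo (3 / 4 : ℝ) 1) (n : ℕ) (hn : 1 < n)
    (μ σ α : ℝ) (hσ : 0 < σ)
    (S0 S1 : Matrix (Fin n) (Fin n) ℝ)
    (hS0 : S0 = ((n : ℝ)⁻¹) • (1 : Matrix (Fin n) (Fin n) ℝ) + (α ^ 2) • fbmCov H n)
    (hS1 : S1 = ((n : ℝ)⁻¹) • (1 : Matrix (Fin n) (Fin n) ℝ)
        + (μ ^ 2 * α ^ 2 / (σ ^ 2 * (n : ℝ) ^ 2)) • onesMatrix n) :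
    Matrix.trace (S1⁻¹ * S0)
      = (n : ℝ) + α ^ 2 * (n : ℝ) ^ ((2 : ℝ) - 2 * H)
        - μ ^ 2 * α ^ 2 / (μ ^ 2 * α ^ 2 + σ ^ 2) * (1 + α ^ 2) := by
  have hH0 : H ≠ 0 := by linarith [hH.1]
  have hn0 : (0 : ℝ) < n := by exact_mod_cast Nat.zero_lt_of_lt hn
  have hS1inv : S1⁻¹ = (n : ℝ) • 1 - (μ ^ 2 * α ^ 2 / (μ ^ 2 * α ^ 2 + σ ^ 2)) • onesMatrix n := by
    rw [hS1, inv_smul_one_add_smul_onesMatrix (by positivity) (by positivity), inv_inv]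
    congr 2
    field_simp
    ring
  rw [hS1inv, hS0]
  simp only [sub_mul, mul_add, Matrix.smul_mul, Matrix.mul_smul, one_mul, mul_one, trace_sub,
    trace_add, trace_smul, trace_one, Fintype.card_fin, trace_onesMatrix, smul_eq_mul]
  rw [trace_onesMatrix_mul, sum_fbmCov_entries hH0 (by omega), trace_fbmCov hH0]
  rw [rpow_sub hn0, rpow_two]
  field_simp
  ring

/-- `tr(Σ₁⁻¹ Σ₀) = n + α² n^{2-2H} - (μ²α²/(μ²α² + σ²))(1 + α²)`. -/
theorem statement8 (H : ℝ) (hH : H ∈ Set.Ioo (3 / 4 : ℝ) 1) (n : ℕ) (hn : 1 < n)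
    (μ σ α : ℝ) (hσ : 0 < σ) (hα : 0 < α)
    (S0 S1 : Matrix (Fin n) (Fin n) ℝ)
    (hS0 : S0 = ((n : ℝ)⁻¹) • (1 : Matrix (Fin n) (Fin n) ℝ) + (α ^ 2) • fbmCov H n)
    (hS1 : S1 = ((n : ℝ)⁻¹) • (1 : Matrix (Fin n) (Fin n) ℝ)
        + (μ ^ 2 * α ^ 2 / (σ ^ 2 * (n : ℝ) ^ 2)) • onesMatrix n) :
    Matrix.trace (S1⁻¹ * S0)
      = (n : ℝ) + α ^ 2 * (n : ℝ) ^ ((2 : ℝ) - 2 * H)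
        - μ ^ 2 * α ^ 2 / (μ ^ 2 * α ^ 2 + σ ^ 2) * (1 + α ^ 2) :=
  statement8_general H hH n hn μ σ α hσ S0 S1 hS0 hS1
end

section
/- Let $\sigma>0$ and let $Z$ and $B$ be independent standard Gaussian random variables on a probability space $(\Omega,\mathcal{F},P)$. Define $h(x)=\frac{1}{\sqrt{2\pi}\,\sigma x}\exp\left(-\frac{(\ln x)^2}{2\sigma^2}\right)$ for $x>0$ (the density of the law of $e^{\sigma Z}$) and $g(x)=e^{-x}/h(x)$. Then: (1) $g(e^{\sigma Z})>0$ almost surely and $E_P\left[g(e^{\sigma Z})\right]=1$, so $d\tilde P = g(e^{\sigma Z})\,dP$ defines a probability measure equivalent to $P$; and (2) for every $\alpha>0$, $E_{\tilde P}\left[\exp\left(\sigma Z+\frac{\sigma}{\alpha}B-\frac{\sigma^2}{2\alpha^2}\right)\right]=1$. -/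
/-!
`g` is the ratio of the `Exp(1)` density to the lognormal density of `e^{σZ}`, so under `P̃` the
variable `e^{σZ}` is standard exponential; the substitution `y = e^{σz}` turns `P̃`-expectations
of functions of `e^{σZ}` into integrals `∫₀^∞ e^{-y} f(y) dy`, giving total mass `Γ(1) = 1` and
mean `Γ(2) = 1`. As the density is a function of `Z` alone, independence of `Z` and `B` under `P`
factorizes `E_P̃[e^{σZ + tB}] = E_P̃[e^{σZ}] · E_P[e^{tB}] = e^{t²/2}`, which cancels the drift
`-σ²/(2α²)` for `t = σ/α`.
-/

open MeasureTheory ProbabilityTheory Real Set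

section ChangeOfVariables

variable {E : Type*} [NormedAddCommGroup E] [NormedSpace ℝ E]

theorem integral_exp_smul_comp_exp (f : ℝ → E) :
    ∫ x, exp x • f (exp x) = ∫ y in Ioi 0, f y := by
  rw [← range_exp, ← image_univ]
  simpa [abs_of_pos (exp_pos _)] using (integral_image_eq_integral_abs_deriv_smul
    MeasurableSet.univ (fun x _ ↦ (hasDerivAt_exp x).hasDerivWithinAt)
    exp_injective.injOn f).symm

theorem integral_mul_exp_mul_smul_comp_exp_mul {c : ℝ} (hc : 0 < c) (f : ℝ → E) :
    ∫ z, (c * exp (c * z)) • f (exp (c * z)) = ∫ y in Ioi 0, f y := by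
  have h := Measure.integral_comp_mul_left (fun x ↦ exp x • f (exp x)) c
  rw [integral_exp_smul_comp_exp] at h
  simp_rw [mul_smul, integral_smul, h, smul_smul, abs_inv, abs_of_pos hc,
    mul_inv_cancel₀ hc.ne', one_smul]

end ChangeOfVariables

theorem integral_div_gaussianPDFReal {μ : ℝ} {v : NNReal} (hv : v ≠ 0) (ψ : ℝ → ℝ) :
    ∫ x, ψ x / gaussianPDFReal μ v x ∂gaussianReal μ v = ∫ x, ψ x := by
  rw [integral_gaussianReal_eq_integral_smul hv]
  congr with x
  rw [smul_eq_mul, mul_div_cancel₀ _ (gaussianPDFReal_pos μ v x hv).ne']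

theorem integral_withDensity_ofReal {Ω E : Type*} [MeasurableSpace Ω] [NormedAddCommGroup E]
    [NormedSpace ℝ E] {μ : Measure Ω} {ρ : Ω → ℝ} (hρ : Measurable ρ) (hρ_nonneg : ∀ ω, 0 ≤ ρ ω)
    (F : Ω → E) :
    ∫ ω, F ω ∂μ.withDensity (fun ω ↦ ENNReal.ofReal (ρ ω)) = ∫ ω, ρ ω • F ω ∂μ := by
  rw [integral_withDensity_eq_integral_toReal_smul hρ.ennreal_ofReal
    (ae_of_all _ fun _ ↦ ENNReal.ofReal_lt_top)]
  simp_rw [ENNReal.toReal_ofReal (hρ_nonneg _)]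

theorem integral_exp_neg_mul_Ioi_zero : ∫ y in Ioi (0 : ℝ), exp (-y) * y = 1 := by
  have h := Gamma_eq_integral two_pos
  norm_num [Gamma_two] at h
  exact h.symm

noncomputable def logNormalPDFReal (σ x : ℝ) : ℝ :=
  (√(2 * π) * σ * x)⁻¹ * exp (-(log x) ^ 2 / (2 * σ ^ 2))

noncomputable def expLogNormalRatio (σ x : ℝ) : ℝ :=
  exp (-x) / logNormalPDFReal σ x

@[fun_prop]
theorem measurable_expLogNormalRatio (σ : ℝ) : Measurable (expLogNormalRatio σ) := by
  unfold expLogNormalRatio logNormalPDFReal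
  fun_prop

theorem logNormalPDFReal_exp_mul {σ : ℝ} (hσ : σ ≠ 0) (z : ℝ) :
    logNormalPDFReal σ (exp (σ * z)) = gaussianPDFReal 0 1 z / (σ * exp (σ * z)) := by
  have hexp : -(σ * z) ^ 2 / (2 * σ ^ 2) = -z ^ 2 / 2 := by
    field_simp
  simp only [logNormalPDFReal, log_exp, gaussianPDFReal, hexp, NNReal.coe_one, mul_one, sub_zero]
  field_simp

theorem expLogNormalRatio_pos {σ x : ℝ} (hσ : 0 < σ) (hx : 0 < x) :
    0 < expLogNormalRatio σ x := by
  unfold expLogNormalRatio logNormalPDFReal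
  positivity

theorem integral_expLogNormalRatio_mul {Ω : Type*} [MeasurableSpace Ω] {P : Measure Ω}
    {σ : ℝ} (hσ : 0 < σ) {Z : Ω → ℝ} (hZ : Measurable Z) (hZlaw : P.map Z = gaussianReal 0 1)
    {f : ℝ → ℝ} (hf : Measurable f) :
    ∫ ω, expLogNormalRatio σ (exp (σ * Z ω)) * f (exp (σ * Z ω)) ∂P
      = ∫ y in Ioi 0, exp (-y) * f y := by
  rw [← integral_map (f := fun z ↦ expLogNormalRatio σ (exp (σ * z)) * f (exp (σ * z)))
    hZ.aemeasurable (by fun_prop), hZlaw]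
  have hpdf (z : ℝ) := (gaussianPDFReal_pos 0 1 z one_ne_zero).ne'
  calc ∫ z, expLogNormalRatio σ (exp (σ * z)) * f (exp (σ * z)) ∂gaussianReal 0 1
      = ∫ z, (σ * exp (σ * z)) * (exp (-exp (σ * z)) * f (exp (σ * z)))
          / gaussianPDFReal 0 1 z ∂gaussianReal 0 1 := by
        congr with z
        rw [expLogNormalRatio, logNormalPDFReal_exp_mul hσ.ne']
        field_simp [hpdf z]
    _ = ∫ y in Ioi 0, exp (-y) * f y := by
        rw [integral_div_gaussianPDFReal one_ne_zero]
        exact integral_mul_exp_mul_smul_comp_exp_mul hσ (fun y ↦ exp (-y) * f y)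

theorem integral_exp_mul_add_mul_withDensity_expLogNormalRatio {Ω : Type*} [MeasurableSpace Ω]
    {P : Measure Ω} {σ : ℝ} (hσ : 0 < σ) {Z B : Ω → ℝ} (hZ : Measurable Z) (hB : Measurable B)
    (hindep : IndepFun Z B P) (hZlaw : P.map Z = gaussianReal 0 1)
    (hBlaw : P.map B = gaussianReal 0 1) (t : ℝ) :
    ∫ ω, exp (σ * Z ω + t * B ω)
        ∂P.withDensity (fun ω ↦ ENNReal.ofReal (expLogNormalRatio σ (exp (σ * Z ω))))
      = exp (t ^ 2 / 2) := by
  rw [integral_withDensity_ofReal (by fun_prop) fun _ ↦ (expLogNormalRatio_pos hσ (exp_pos _)).le]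
  have hsplit (ω : Ω) : expLogNormalRatio σ (exp (σ * Z ω)) • exp (σ * Z ω + t * B ω)
      = (expLogNormalRatio σ (exp (σ * Z ω)) * exp (σ * Z ω)) * exp (t * B ω) := by
    rw [smul_eq_mul, exp_add, mul_assoc]
  have hindep' : IndepFun (fun ω ↦ expLogNormalRatio σ (exp (σ * Z ω)) * exp (σ * Z ω))
      (fun ω ↦ exp (t * B ω)) P :=
    hindep.comp (φ := fun z ↦ expLogNormalRatio σ (exp (σ * z)) * exp (σ * z))
      (ψ := fun b ↦ exp (t * b)) (by fun_prop) (by fun_prop)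
  simp_rw [hsplit]
  rw [hindep'.integral_fun_mul_eq_mul_integral (by fun_prop) (by fun_prop),
    integral_expLogNormalRatio_mul hσ hZ hZlaw (f := fun y ↦ y) measurable_id,
    integral_exp_neg_mul_Ioi_zero, one_mul]
  simpa [mgf] using mgf_gaussianReal hBlaw t

theorem statement15_general {Ω : Type*} [MeasurableSpace Ω] (P : Measure Ω)
    (σ : ℝ) (hσ : 0 < σ) (Z B : Ω → ℝ) (hZ : Measurable Z) (hB : Measurable B)
    (hindep : IndepFun Z B P)
    (hZlaw : P.map Z = gaussianReal 0 1) (hBlaw : P.map B = gaussianReal 0 1)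
    (h g : ℝ → ℝ)
    (hh : ∀ x, 0 < x →
      h x = (Real.sqrt (2 * Real.pi) * σ * x)⁻¹ * Real.exp (-(Real.log x) ^ 2 / (2 * σ ^ 2)))
    (hg : ∀ x, 0 < x → g x = Real.exp (-x) / h x) :
    (∀ᵐ ω ∂P, 0 < g (Real.exp (σ * Z ω))) ∧
    (∫ ω, g (Real.exp (σ * Z ω)) ∂P = 1) ∧
    (∀ α : ℝ, 0 < α →
      ∫ ω, Real.exp (σ * Z ω + σ / α * B ω - σ ^ 2 / (2 * α ^ 2))
        ∂(P.withDensity fun ω => ENNReal.ofReal (g (Real.exp (σ * Z ω)))) = 1) := by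
  have hg_exp (z : ℝ) : g (exp (σ * z)) = expLogNormalRatio σ (exp (σ * z)) := by
    rw [hg _ (exp_pos _), hh _ (exp_pos _), expLogNormalRatio, logNormalPDFReal]
  simp only [hg_exp]
  refine ⟨ae_of_all _ fun _ ↦ expLogNormalRatio_pos hσ (exp_pos _), ?_, fun α _ ↦ ?_⟩
  · rw [← integral_exp_neg_Ioi_zero]
    simpa only [mul_one] using
      integral_expLogNormalRatio_mul hσ hZ hZlaw (f := fun _ ↦ 1) measurable_const
  · simp_rw [exp_sub]
    rw [integral_div, integral_exp_mul_add_mul_withDensity_expLogNormalRatio hσ hZ hB hindep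
      hZlaw hBlaw, div_eq_one_iff_eq (exp_pos _).ne']
    ring_nf

/-- the measure `d P̃ = g(e^{σZ}) dP` is a probability measure equivalent
to `P`, and it is a martingale measure for the two-period mixed fractional Black–Scholes
asset `S₁ = exp(σZ + (σ/α)B - σ²/(2α²))`, for every `α > 0`. -/
theorem statement15 {Ω : Type*} [MeasurableSpace Ω] (P : Measure Ω) [IsProbabilityMeasure P]
    (σ : ℝ) (hσ : 0 < σ) (Z B : Ω → ℝ) (hZ : Measurable Z) (hB : Measurable B)
    (hindep : IndepFun Z B P)
    (hZlaw : P.map Z = gaussianReal 0 1) (hBlaw : P.map B = gaussianReal 0 1)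
    (h g : ℝ → ℝ)
    (hh : ∀ x, 0 < x →
      h x = (Real.sqrt (2 * Real.pi) * σ * x)⁻¹ * Real.exp (-(Real.log x) ^ 2 / (2 * σ ^ 2)))
    (hg : ∀ x, 0 < x → g x = Real.exp (-x) / h x) :
    (∀ᵐ ω ∂P, 0 < g (Real.exp (σ * Z ω))) ∧
    (∫ ω, g (Real.exp (σ * Z ω)) ∂P = 1) ∧
    (∀ α : ℝ, 0 < α →
      ∫ ω, Real.exp (σ * Z ω + σ / α * B ω - σ ^ 2 / (2 * α ^ 2))
        ∂(P.withDensity fun ω => ENNReal.ofReal (g (Real.exp (σ * Z ω)))) = 1) :=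
  statement15_general P σ hσ Z B hZ hB hindep hZlaw hBlaw h g hh hg
end

section
/- Let $\sigma>0$ and let $Z$ and $B$ be independent standard Gaussian random variables on a probability space $(\Omega,\mathcal{F},P)$. Let $h(x)=\frac{1}{\sqrt{2\pi}\,\sigma x}\exp\left(-\frac{(\ln x)^2}{2\sigma^2}\right)$ for $x>0$, $g(x)=e^{-x}/h(x)$, and let $\tilde P$ be the probability measure with $d\tilde P = g(e^{\sigma Z})\,dP$. For each $\alpha>0$ let $Q^{\alpha,1}$ and $\tilde Q^{\alpha,1}$ denote the laws on $\mathbb{R}$ of $\alpha Z+B$ under $P$ and under $\tilde P$, respectively. Then for every family of Borel sets $(A_\alpha)_{\alpha>0}$ of $\mathbb{R}$, $Q^{\alpha,1}(A_\alpha)\to 0$ as $\alpha\to\infty$ if and only if $\tilde Q^{\alpha,1}(A_\alpha)\to 0$ as $\alpha\to\infty$; i.e., the families $(\tilde Q^{\alpha,1})_{\alpha>0}$ and $(Q^{\alpha,1})_{\alpha>0}$ are mutually contiguous. -/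
/-!
`h` is the density of the lognormal variable `e^{σZ}`, so `g(e^{σZ})` is the likelihood ratio
that turns `e^{σZ}` into a standard exponential variable: under the law of `Z` it integrates to
`∫ σ e^{σz} e^{-e^{σz}} dz = ∫₀^∞ e^{-u} du = 1`. Hence `P̃` is a probability measure whose
density is finite and positive, so `dP = g(e^{σZ})⁻¹ dP̃` as well. By absolute continuity of the
Lebesgue integral, small `P`-measure then forces small `P̃`-measure uniformly and vice versa; this
passes to the image measures under any measurable map, in particular under `αZ + B`.
-/

open MeasureTheory ProbabilityTheory Real Filter
open scoped ENNReal NNReal Topology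

namespace MeasureTheory

variable {α ι : Type*} [MeasurableSpace α] {μ : Measure α} {w : α → ℝ≥0∞} {l : Filter ι}
  {s : ι → Set α}

theorem tendsto_withDensity_comp_nhds_zero [SFinite μ] (hw : ∫⁻ x, w x ∂μ ≠ ∞)
    (hs : Tendsto (μ ∘ s) l (𝓝 0)) : Tendsto (μ.withDensity w ∘ s) l (𝓝 0) := by
  simpa only [Function.comp_def, withDensity_apply'] using tendsto_setLIntegral_zero hw hs

theorem tendsto_withDensity_comp_nhds_zero_iff [IsFiniteMeasure μ]
    [IsFiniteMeasure (μ.withDensity w)] (hw : AEMeasurable w μ) (hw_ne_zero : ∀ᵐ x ∂μ, w x ≠ 0)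
    (hw_ne_top : ∀ᵐ x ∂μ, w x ≠ ∞) :
    Tendsto (μ.withDensity w ∘ s) l (𝓝 0) ↔ Tendsto (μ ∘ s) l (𝓝 0) := by
  refine ⟨fun h => ?_, tendsto_withDensity_comp_nhds_zero ?_⟩
  · have hμ := withDensity_inv_same₀ hw hw_ne_zero hw_ne_top
    rw [← hμ]
    refine tendsto_withDensity_comp_nhds_zero ?_ h
    rw [← setLIntegral_univ, ← withDensity_apply _ MeasurableSet.univ, hμ]
    exact measure_ne_top _ _
  · rw [← setLIntegral_univ, ← withDensity_apply _ MeasurableSet.univ]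
    exact measure_ne_top _ _

end MeasureTheory

theorem lintegral_mul_exp_mul_exp_neg_exp {σ : ℝ} (hσ : 0 < σ) :
    ∫⁻ z, ENNReal.ofReal (σ * exp (σ * z) * exp (-exp (σ * z))) = 1 := by
  have himage : (fun z => exp (σ * z)) '' Set.univ = Set.Ioi 0 := by
    ext u
    refine ⟨fun ⟨z, _, hz⟩ => hz ▸ exp_pos _, fun hu => ⟨log u / σ, trivial, ?_⟩⟩
    simp only [mul_div_cancel₀ _ hσ.ne', exp_log hu]
  have hderiv (z : ℝ) : HasDerivWithinAt (fun z => exp (σ * z)) (σ * exp (σ * z)) Set.univ z :=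
    (((hasDerivAt_id' z).const_mul σ).exp.hasDerivWithinAt).congr_deriv (by ring)
  have hsubst := lintegral_image_eq_lintegral_abs_deriv_mul MeasurableSet.univ
    (fun z _ => hderiv z) (exp_injective.comp (mul_right_injective₀ hσ.ne')).injOn
    (fun u => ENNReal.ofReal (exp (-u)))
  rw [himage, setLIntegral_univ] at hsubst
  calc ∫⁻ z, ENNReal.ofReal (σ * exp (σ * z) * exp (-exp (σ * z)))
      = ∫⁻ u in Set.Ioi 0, ENNReal.ofReal (exp (-u)) := by
        rw [hsubst]
        congr! 2 with z
        rw [abs_of_pos (by positivity), ENNReal.ofReal_mul (by positivity)]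
    _ = 1 := by
        rw [← ofReal_integral_eq_lintegral_ofReal (integrableOn_exp_neg_Ioi 0)
          (.of_forall fun _ => (exp_pos _).le), integral_exp_neg_Ioi_zero, ENNReal.ofReal_one]

def IsLognormalDensity (σ : ℝ) (h : ℝ → ℝ) : Prop :=
  ∀ x, 0 < x → h x = (√(2 * π) * σ * x)⁻¹ * exp (-(log x) ^ 2 / (2 * σ ^ 2))

section LikelihoodRatio

variable {σ : ℝ} {h g : ℝ → ℝ}

theorem IsLognormalDensity.apply_exp_mul (hh : IsLognormalDensity σ h) (hσ : σ ≠ 0) (z : ℝ) :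
    h (exp (σ * z)) = gaussianPDFReal 0 1 z / (σ * exp (σ * z)) := by
  rw [hh _ (exp_pos _), log_exp, gaussianPDFReal]
  field_simp
  simp only [NNReal.coe_one, mul_one, sub_zero]
  ring

theorem g_exp_mul_eq (hh : IsLognormalDensity σ h)
    (hg : ∀ x, 0 < x → g x = exp (-x) / h x) (hσ : σ ≠ 0) (z : ℝ) :
    g (exp (σ * z)) = σ * exp (σ * z) * exp (-exp (σ * z)) / gaussianPDFReal 0 1 z := by
  rw [hg _ (exp_pos _), hh.apply_exp_mul hσ]
  field_simp

theorem g_exp_mul_pos (hh : IsLognormalDensity σ h)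
    (hg : ∀ x, 0 < x → g x = exp (-x) / h x) (hσ : 0 < σ) (z : ℝ) : 0 < g (exp (σ * z)) := by
  rw [g_exp_mul_eq hh hg hσ.ne']
  have := gaussianPDFReal_pos 0 1 z one_ne_zero
  positivity

theorem measurable_g_exp_mul (hh : IsLognormalDensity σ h)
    (hg : ∀ x, 0 < x → g x = exp (-x) / h x) (hσ : σ ≠ 0) :
    Measurable fun z => g (exp (σ * z)) := by
  simp only [g_exp_mul_eq hh hg hσ]
  exact Measurable.div (by fun_prop) (measurable_gaussianPDFReal 0 1)

theorem lintegral_g_exp_mul_gaussianReal (hh : IsLognormalDensity σ h)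
    (hg : ∀ x, 0 < x → g x = exp (-x) / h x) (hσ : 0 < σ) :
    ∫⁻ z, ENNReal.ofReal (g (exp (σ * z))) ∂gaussianReal 0 1 = 1 := by
  rw [gaussianReal_of_var_ne_zero _ one_ne_zero, lintegral_withDensity_eq_lintegral_mul _
    (measurable_gaussianPDF 0 1) (measurable_g_exp_mul hh hg hσ.ne').ennreal_ofReal,
    ← lintegral_mul_exp_mul_exp_neg_exp hσ]
  refine lintegral_congr fun z => ?_
  have hpdf := gaussianPDFReal_pos 0 1 z one_ne_zero
  rw [Pi.mul_apply, gaussianPDF, ← ENNReal.ofReal_mul hpdf.le, g_exp_mul_eq hh hg hσ.ne',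
    mul_div_cancel₀ _ hpdf.ne']

end LikelihoodRatio

theorem statement16_general {Ω : Type*} [MeasurableSpace Ω] (P : Measure Ω) [IsProbabilityMeasure P]
    (σ : ℝ) (hσ : 0 < σ) (Z B : Ω → ℝ) (hZ : Measurable Z) (hB : Measurable B)
    (hZlaw : P.map Z = gaussianReal 0 1)
    (h g : ℝ → ℝ)
    (hh : ∀ x, 0 < x →
      h x = (Real.sqrt (2 * Real.pi) * σ * x)⁻¹ * Real.exp (-(Real.log x) ^ 2 / (2 * σ ^ 2)))
    (hg : ∀ x, 0 < x → g x = Real.exp (-x) / h x) :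
    ∀ A : ℝ → Set ℝ, (∀ α, MeasurableSet (A α)) →
      (Filter.Tendsto (fun α : ℝ =>
          ((P.map fun ω => α * Z ω + B ω) (A α)).toReal) Filter.atTop (nhds 0)
        ↔ Filter.Tendsto (fun α : ℝ =>
          (((P.withDensity fun ω => ENNReal.ofReal (g (Real.exp (σ * Z ω)))).map
              fun ω => α * Z ω + B ω) (A α)).toReal) Filter.atTop (nhds 0)) := by
  intro A hA
  have hρ := (measurable_g_exp_mul hh hg hσ.ne').ennreal_ofReal
  have : IsProbabilityMeasure (P.withDensity fun ω => ENNReal.ofReal (g (exp (σ * Z ω)))) := by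
    refine ⟨?_⟩
    rw [withDensity_apply _ .univ, Measure.restrict_univ, ← lintegral_map hρ hZ, hZlaw,
      lintegral_g_exp_mul_gaussianReal hh hg hσ]
  have hmap (μ : Measure Ω) (α : ℝ) : (μ.map fun ω => α * Z ω + B ω) (A α) =
      μ ((fun ω => α * Z ω + B ω) ⁻¹' A α) :=
    Measure.map_apply (by fun_prop) (hA α)
  simp only [hmap, ENNReal.tendsto_toReal_zero_iff fun _ => measure_ne_top _ _]
  exact (tendsto_withDensity_comp_nhds_zero_iff (w := fun ω => ENNReal.ofReal (g (exp (σ * Z ω))))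
    (hρ.comp hZ).aemeasurable
    (.of_forall fun _ => (ENNReal.ofReal_pos.2 (g_exp_mul_pos hh hg hσ _)).ne')
    (.of_forall fun _ => ENNReal.ofReal_ne_top)).symm

/-- the laws of `αZ + B` under `P` and under `P̃` (where
`d P̃ = g(e^{σZ}) dP`) are mutually contiguous as `α → ∞`: for every family of Borel
sets `(A_α)`, `Q^{α,1}(A_α) → 0` iff `Q̃^{α,1}(A_α) → 0`. -/
theorem statement16 {Ω : Type*} [MeasurableSpace Ω] (P : Measure Ω) [IsProbabilityMeasure P]
    (σ : ℝ) (hσ : 0 < σ) (Z B : Ω → ℝ) (hZ : Measurable Z) (hB : Measurable B)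
    (hindep : IndepFun Z B P)
    (hZlaw : P.map Z = gaussianReal 0 1) (hBlaw : P.map B = gaussianReal 0 1)
    (h g : ℝ → ℝ)
    (hh : ∀ x, 0 < x →
      h x = (Real.sqrt (2 * Real.pi) * σ * x)⁻¹ * Real.exp (-(Real.log x) ^ 2 / (2 * σ ^ 2)))
    (hg : ∀ x, 0 < x → g x = Real.exp (-x) / h x) :
    ∀ A : ℝ → Set ℝ, (∀ α, MeasurableSet (A α)) →
      (Filter.Tendsto (fun α : ℝ =>
          ((P.map fun ω => α * Z ω + B ω) (A α)).toReal) Filter.atTop (nhds 0)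
        ↔ Filter.Tendsto (fun α : ℝ =>
          (((P.withDensity fun ω => ENNReal.ofReal (g (Real.exp (σ * Z ω)))).map
              fun ω => α * Z ω + B ω) (A α)).toReal) Filter.atTop (nhds 0)) :=
  statement16_general P σ hσ Z B hZ hB hZlaw h g hh hg
end
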